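/- arXiv:1411.0828 — 2 statements merged into one kernel-verified Lean document; each statement's English description precedes it below -/
import Mathlib

section
/- A POVM A is verifiably pure state informationally complete (every pure state is distinguishable by statistics from every other state, pure or mixed) if and only if every nonzero T in R(A)^⊥ satisfies rank±(T) ≥ 2, where rank±(T) is the minimum of the number of strictly positive and strictly negative eigenvalues of T. -/
/-!
Equal statistics of `P` and `ρ` say exactly that `ρ - P ∈ R(A)^⊥`, and every `T ∈ R(A)^⊥`
has trace zero because `1 ∈ R(A)`.

If a nonzero `T ∈ R(A)^⊥` has a single negative eigenvalue `-c` with unit eigenvector `e`, then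
`P = e eᴴ` and `ρ = P + T / c` are a pure state and a different state with the same statistics
(a single positive eigenvalue is handled by `-T`, and a nonzero trace-zero `T` has eigenvalues
of both signs).

Conversely, if `ρ ≥ 0` then `ρ - P` has at most `rank P` negative eigenvalues: otherwise some
nonzero vector in the span of the corresponding eigenvectors lies in `ker P`, and `ρ` would take
a negative value on it. For a pure state `P` this leaves at most one negative eigenvalue.
-/

open Matrix Kronecker
open scoped ComplexOrder

noncomputable section

def IsPOVM {n : Type*} [Fintype n] [DecidableEq n] {m : ℕ}
    (A : Fin m → Matrix n n ℂ) : Prop :=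
  (∀ x, (A x).PosSemidef) ∧ ∑ x, A x = 1

def IsState {n : Type*} [Fintype n] [DecidableEq n] (ρ : Matrix n n ℂ) : Prop :=
  ρ.PosSemidef ∧ ρ.trace = 1

def IsPureState {n : Type*} [Fintype n] [DecidableEq n] (ρ : Matrix n n ℂ) : Prop :=
  ρ.IsHermitian ∧ ρ * ρ = ρ ∧ ρ.rank = 1

def Rspan {n : Type*} [Fintype n] [DecidableEq n] {ι : Type*}
    (A : ι → Matrix n n ℂ) : Submodule ℝ (Matrix n n ℂ) :=
  Submodule.span ℝ (Set.range A)

def RPerp {n : Type*} [Fintype n] [DecidableEq n] {m : ℕ}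
    (A : Fin m → Matrix n n ℂ) : Set (Matrix n n ℂ) :=
  {T | T.IsHermitian ∧ ∀ S ∈ Rspan A, (S * T).trace = 0}

def herm (n : Type*) [Fintype n] [DecidableEq n] : Submodule ℝ (Matrix n n ℂ) where
  carrier := {T | T.IsHermitian}
  add_mem' := fun h1 h2 => h1.add h2
  zero_mem' := Matrix.isHermitian_zero
  smul_mem' := fun c T h => by
    rw [Set.mem_setOf_eq, Matrix.IsHermitian, Matrix.conjTranspose_smul, star_trivial, h]

def hermPerp {n : Type*} [Fintype n] [DecidableEq n]
    (V : Submodule ℝ (Matrix n n ℂ)) : Submodule ℝ (Matrix n n ℂ) where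
  carrier := {T | T.IsHermitian ∧ ∀ S ∈ V, (S * T).trace = 0}
  add_mem' := fun h1 h2 => ⟨h1.1.add h2.1, fun S hS => by
    rw [mul_add, Matrix.trace_add, h1.2 S hS, h2.2 S hS, add_zero]⟩
  zero_mem' := ⟨Matrix.isHermitian_zero, fun S _ => by simp⟩
  smul_mem' := fun c T h => ⟨by
      rw [Matrix.IsHermitian, Matrix.conjTranspose_smul, star_trivial, h.1],
    fun S hS => by rw [Matrix.mul_smul, Matrix.trace_smul, h.2 S hS, smul_zero]⟩

def tensSub {nA nB : Type*} [Fintype nA] [DecidableEq nA] [Fintype nB] [DecidableEq nB]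
    (U : Submodule ℝ (Matrix nA nA ℂ)) (V : Submodule ℝ (Matrix nB nB ℂ)) :
    Submodule ℝ (Matrix (nA × nB) (nA × nB) ℂ) :=
  Submodule.span ℝ {T | ∃ S ∈ U, ∃ R ∈ V, T = S ⊗ₖ R}

noncomputable def rankPM {n : Type*} [Fintype n] [DecidableEq n]
    (T : Matrix n n ℂ) (hT : T.IsHermitian) : ℕ :=
  min (Finset.univ.filter fun i => 0 < hT.eigenvalues i).card
      (Finset.univ.filter fun i => hT.eigenvalues i < 0).card

open Unitary Finset

lemma exists_neg_and_nonneg_of_sum_eq_zero {n : Type*} [Fintype n] {μ : n → ℝ}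
    (hsum : ∑ i, μ i = 0) (hμ : μ ≠ 0) (hcard : #{i | μ i < 0} ≤ 1) :
    ∃ k, μ k < 0 ∧ ∀ i ≠ k, 0 ≤ μ i := by
  rcases Nat.le_one_iff_eq_zero_or_eq_one.mp hcard with h | h
  · rw [card_eq_zero, filter_eq_empty_iff] at h
    refine absurd ((Fintype.sum_eq_zero_iff_of_nonneg fun i => ?_).mp hsum) hμ
    simpa using h (mem_univ i)
  · obtain ⟨k, hk⟩ := card_eq_one.mp h
    have hmem : ∀ i, μ i < 0 ↔ i = k := fun i => by simpa using Finset.ext_iff.mp hk i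
    exact ⟨k, (hmem k).mpr rfl, fun i hi => not_lt.mp fun hneg => hi ((hmem i).mp hneg)⟩

lemma sum_mul_normSq_neg {n : Type*} [Fintype n] {d : n → ℝ} {y : n → ℂ} (hy : y ≠ 0)
    (hd : ∀ i, y i ≠ 0 → d i < 0) : ∑ i, d i * Complex.normSq (y i) < 0 := by
  obtain ⟨i, hi⟩ := Function.ne_iff.mp hy
  refine sum_neg' (fun j _ => ?_)
    ⟨i, mem_univ i, mul_neg_of_neg_of_pos (hd i hi) (Complex.normSq_pos.mpr hi)⟩
  by_cases hj : y j = 0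
  · simp [hj]
  · exact mul_nonpos_of_nonpos_of_nonneg (hd j hj).le (Complex.normSq_nonneg _)

lemma Matrix.exists_ne_zero_mulVec_eq_zero_of_rank_lt_card {K m n : Type*} [Field K]
    [Fintype n] [DecidableEq n] (M : Matrix m n K) (s : Finset n) (h : M.rank < #s) :
    ∃ y : n → K, y ≠ 0 ∧ (∀ i, y i ≠ 0 → i ∈ s) ∧ M *ᵥ y = 0 := by
  have hdep : ¬ LinearIndepOn K (fun i => M *ᵥ Pi.single i 1) (s : Set n) := fun hli => by
    have hspan : Submodule.span K (Set.range fun i : (s : Set n) => M *ᵥ Pi.single (i : n) 1) ≤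
        LinearMap.range M.mulVecLin :=
      Submodule.span_le.mpr (Set.range_subset_iff.mpr fun i => ⟨_, rfl⟩)
    have := Submodule.finrank_mono hspan
    rw [finrank_span_eq_card hli] at this
    simp only [Finset.coe_sort_coe, Fintype.card_coe] at this
    exact h.not_ge this
  obtain ⟨f, hf, i, hi, hfi⟩ := not_linearIndepOn_finset_iff.mp hdep
  have hy : ∀ a, (∑ i ∈ s, f i • Pi.single i (1 : K)) a = if a ∈ s then f a else 0 := by
    intro a
    simp [Finset.sum_apply, Pi.single_apply]
  refine ⟨∑ i ∈ s, f i • Pi.single i 1, fun h0 => hfi ?_, fun a ha => ?_, ?_⟩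
  · simpa [hy, hi] using congrFun h0 i
  · by_contra has
    simp [hy, has] at ha
  · simpa [Matrix.mulVec_sum, Matrix.mulVec_smul] using hf

section

variable {n : Type*} [Fintype n]

lemma trace_mul_eq_trace_mul_iff (P ρ S : Matrix n n ℂ) :
    (P * S).trace = (ρ * S).trace ↔ (S * (ρ - P)).trace = 0 := by
  rw [mul_sub, trace_sub, sub_eq_zero, trace_mul_comm S, trace_mul_comm S, eq_comm]

variable [DecidableEq n]

lemma trace_conjStarAlgAut (U : unitaryGroup n ℂ) (D : Matrix n n ℂ) :
    (conjStarAlgAut ℂ _ U D).trace = D.trace := by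
  rw [conjStarAlgAut_apply, trace_mul_cycle, coe_star_mul_self, one_mul]

lemma rank_conjStarAlgAut (U : unitaryGroup n ℂ) (D : Matrix n n ℂ) :
    (conjStarAlgAut ℂ _ U D).rank = D.rank := by
  rw [conjStarAlgAut_apply, ← coe_star,
    rank_mul_eq_left_of_isUnit_det _ _ (UnitaryGroup.det_isUnit (star U)),
    rank_mul_eq_right_of_isUnit_det _ _ (UnitaryGroup.det_isUnit U)]

lemma IsPureState.conjStarAlgAut {P : Matrix n n ℂ} (hP : IsPureState P)
    (U : unitaryGroup n ℂ) :
    IsPureState (Unitary.conjStarAlgAut ℂ _ U P) :=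
  ⟨(map_star (Unitary.conjStarAlgAut ℂ _ U) P).symm.trans (congrArg _ hP.1),
    by rw [← map_mul, hP.2.1], (rank_conjStarAlgAut U P).trans hP.2.2⟩

lemma IsState.conjStarAlgAut {ρ : Matrix n n ℂ} (hρ : IsState ρ) (U : unitaryGroup n ℂ) :
    IsState (Unitary.conjStarAlgAut ℂ _ U ρ) :=
  ⟨by simpa [← star_eq_conjTranspose] using
      hρ.1.mul_mul_conjTranspose_same (U : Matrix n n ℂ),
    (trace_conjStarAlgAut U ρ).trans hρ.2⟩

lemma isPureState_diagonal_single (k : n) : IsPureState (diagonal (Pi.single k (1 : ℂ))) := by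
  refine ⟨?_, ?_, ?_⟩
  · rw [IsHermitian, diagonal_conjTranspose]
    congr 1; ext i; by_cases h : i = k <;> simp [h]
  · rw [diagonal_mul_diagonal]
    congr 1; ext i; by_cases h : i = k <;> simp [h]
  · simp [rank_diagonal, Pi.single_apply]

lemma isState_diagonal {ν : n → ℝ} (hν : 0 ≤ ν) (hsum : ∑ i, ν i = 1) :
    IsState (diagonal (RCLike.ofReal ∘ ν : n → ℂ)) :=
  ⟨posSemidef_diagonal_iff.mpr fun i => by simpa using hν i,
    by simp [trace_diagonal, ← Complex.ofReal_sum, hsum]⟩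

lemma star_dotProduct_diagonal_mulVec (d : n → ℝ) (y : n → ℂ) :
    star y ⬝ᵥ (diagonal (RCLike.ofReal ∘ d : n → ℂ) *ᵥ y) =
      ↑(∑ i, d i * Complex.normSq (y i)) := by
  simp only [dotProduct, mulVec_diagonal, Complex.ofReal_sum, Complex.ofReal_mul,
    Complex.normSq_eq_conj_mul_self, Pi.star_apply, Function.comp_apply, RCLike.star_def]
  exact sum_congr rfl fun i _ => mul_left_comm _ _ _

lemma star_dotProduct_conjStarAlgAut_mulVec (U : unitaryGroup n ℂ) (D : Matrix n n ℂ)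
    (y : n → ℂ) :
    star ((U : Matrix n n ℂ) *ᵥ y) ⬝ᵥ (conjStarAlgAut ℂ _ U D *ᵥ (U *ᵥ y)) =
      star y ⬝ᵥ (D *ᵥ y) := by
  rw [conjStarAlgAut_apply, star_mulVec, ← dotProduct_mulVec, mulVec_mulVec, mulVec_mulVec,
    ← star_eq_conjTranspose]
  simp only [Matrix.mul_assoc, coe_star_mul_self, Matrix.mul_one]
  rw [← Matrix.mul_assoc, coe_star_mul_self, Matrix.one_mul]

lemma neg_conjStarAlgAut_diagonal (U : unitaryGroup n ℂ) (μ : n → ℝ) :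
    -(conjStarAlgAut ℂ _ U (diagonal (RCLike.ofReal ∘ μ))) =
      conjStarAlgAut ℂ _ U (diagonal (RCLike.ofReal ∘ (-μ))) := by
  rw [← map_neg, diagonal_neg]
  congr 2
  ext i
  simp

lemma card_neg_eigenvalues_sub_le_rank {ρ P : Matrix n n ℂ} (hρ : ρ.PosSemidef)
    (hT : (ρ - P).IsHermitian) : #{i | hT.eigenvalues i < 0} ≤ P.rank := by
  by_contra! h
  set U := hT.eigenvectorUnitary
  obtain ⟨y, hy0, hyneg, hPy⟩ := exists_ne_zero_mulVec_eq_zero_of_rank_lt_card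
    (P * (U : Matrix n n ℂ)) _ ((rank_mul_le_left _ _).trans_lt h)
  have hρy : ρ *ᵥ (U *ᵥ y) = (ρ - P) *ᵥ (U *ᵥ y) := by
    rw [sub_mulVec, mulVec_mulVec y P, hPy, sub_zero]
  have hform : star ((U : Matrix n n ℂ) *ᵥ y) ⬝ᵥ ((ρ - P) *ᵥ (U *ᵥ y)) =
      ↑(∑ i, hT.eigenvalues i * Complex.normSq (y i)) := by
    conv_lhs => rw [hT.spectral_theorem]
    rw [star_dotProduct_conjStarAlgAut_mulVec, star_dotProduct_diagonal_mulVec]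
  have hnonneg := hρ.dotProduct_mulVec_nonneg (U *ᵥ y)
  rw [hρy, hform, Complex.zero_le_real] at hnonneg
  exact (sum_mul_normSq_neg hy0 fun i hi => by simpa using hyneg i hi).not_ge hnonneg

lemma exists_isPureState_isState_sub_eq_smul (U : unitaryGroup n ℂ) {μ : n → ℝ}
    (hsum : ∑ i, μ i = 0) {k : n} (hk : μ k < 0) (hpos : ∀ i ≠ k, 0 ≤ μ i) :
    ∃ P ρ : Matrix n n ℂ, IsPureState P ∧ IsState ρ ∧
      ρ - P = ((-μ k : ℝ) : ℂ)⁻¹ •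
        conjStarAlgAut ℂ _ U (diagonal (RCLike.ofReal ∘ μ)) := by
  set c := -μ k
  have hc : 0 < c := neg_pos.mpr hk
  set ν : n → ℝ := Pi.single k 1 + c⁻¹ • μ
  have hν_nonneg : 0 ≤ ν := fun i => by
    by_cases h : i = k
    · subst h; simp [ν, c, hk.ne]
    · simpa [ν, h] using mul_nonneg (inv_nonneg.mpr hc.le) (hpos i h)
  have hν_sum : ∑ i, ν i = 1 := by simp [ν, sum_add_distrib, ← mul_sum, hsum]
  refine ⟨_, _, (isPureState_diagonal_single k).conjStarAlgAut U,
    (isState_diagonal hν_nonneg hν_sum).conjStarAlgAut U, ?_⟩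
  rw [← map_sub, ← map_smul, diagonal_sub, ← diagonal_smul]
  congr 2
  ext i
  by_cases h : i = k <;> simp [ν, h]

variable {m : ℕ} {A : Fin m → Matrix n n ℂ}

lemma mem_RPerp_iff {T : Matrix n n ℂ} :
    T ∈ RPerp A ↔ T.IsHermitian ∧ ∀ x, (A x * T).trace = 0 := by
  refine and_congr_right fun _ =>
    ⟨fun h x => h _ (Submodule.subset_span ⟨x, rfl⟩), fun h S hS => ?_⟩
  induction hS using Submodule.span_induction with
  | mem S hS => obtain ⟨x, rfl⟩ := hS; exact h x
  | zero => simp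
  | add S S' _ _ hS hS' => rw [add_mul, trace_add, hS, hS', add_zero]
  | smul c S _ hS => rw [smul_mul, trace_smul, hS, smul_zero]

lemma neg_mem_RPerp {T : Matrix n n ℂ} (hT : T ∈ RPerp A) : -T ∈ RPerp A :=
  (hermPerp (Rspan A)).neg_mem hT

lemma IsPOVM.trace_eq_zero_of_mem_RPerp (hA : IsPOVM A) {T : Matrix n n ℂ}
    (hT : T ∈ RPerp A) : T.trace = 0 := by
  have h1 : (1 : Matrix n n ℂ) ∈ Rspan A :=
    hA.2 ▸ Submodule.sum_mem _ fun x _ => Submodule.subset_span ⟨x, rfl⟩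
  simpa using hT.2 1 h1

lemma IsPOVM.exists_indistinguishable_of_card_neg_le_one (hA : IsPOVM A) {T : Matrix n n ℂ}
    (hT : T ∈ RPerp A) (hT0 : T ≠ 0) (U : unitaryGroup n ℂ) {μ : n → ℝ}
    (hTU : T = conjStarAlgAut ℂ _ U (diagonal (RCLike.ofReal ∘ μ)))
    (hcard : #{i | μ i < 0} ≤ 1) :
    ∃ P ρ : Matrix n n ℂ, IsPureState P ∧ IsState ρ ∧ ρ ≠ P ∧
      ∀ x, (P * A x).trace = (ρ * A x).trace := by
  have hsum : ∑ i, μ i = 0 := by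
    have := hA.trace_eq_zero_of_mem_RPerp hT
    rw [hTU, trace_conjStarAlgAut, trace_diagonal] at this
    simpa [← Complex.ofReal_sum] using this
  have hμ : μ ≠ 0 := by
    rintro rfl
    exact hT0 (by simp [hTU])
  obtain ⟨k, hk, hpos⟩ := exists_neg_and_nonneg_of_sum_eq_zero hsum hμ hcard
  obtain ⟨P, ρ, hP, hρ, hρP⟩ := exists_isPureState_isState_sub_eq_smul U hsum hk hpos
  rw [← hTU] at hρP
  refine ⟨P, ρ, hP, hρ, fun h => ?_, fun x => ?_⟩
  · rw [h, sub_self, eq_comm, smul_eq_zero] at hρP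
    exact hρP.elim (inv_ne_zero (by exact_mod_cast (neg_pos.mpr hk).ne')) hT0
  · rw [trace_mul_eq_trace_mul_iff, hρP, Matrix.mul_smul, trace_smul, (mem_RPerp_iff.mp hT).2,
      smul_zero]

end

/-- A POVM `A` is verifiably pure state informationally complete (every pure
state is distinguished by statistics from every other state) iff every nonzero
`T ∈ R(A)^⊥` has at least 2 strictly positive and 2 strictly negative eigenvalues. -/
theorem stmt16 {d m : ℕ} (A : Fin m → Matrix (Fin d) (Fin d) ℂ) (hA : IsPOVM A) :
    (∀ P ρ : Matrix (Fin d) (Fin d) ℂ, IsPureState P → IsState ρ → ρ ≠ P →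
      ∃ x, (P * A x).trace ≠ (ρ * A x).trace) ↔
    (∀ T ∈ RPerp A, T ≠ 0 → ∀ hT : T.IsHermitian, 2 ≤ rankPM T hT) := by
  constructor
  · intro hdist T hT hT0 hTh
    by_contra! hlt
    obtain ⟨P, ρ, hP, hρ, hne, hstat⟩ : ∃ P ρ : Matrix (Fin d) (Fin d) ℂ,
        IsPureState P ∧ IsState ρ ∧ ρ ≠ P ∧
          ∀ x, (P * A x).trace = (ρ * A x).trace := by
      rcases min_lt_iff.mp hlt with hpos | hneg
      · exact hA.exists_indistinguishable_of_card_neg_le_one (neg_mem_RPerp hT)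
          (neg_ne_zero.mpr hT0) _
          ((congrArg Neg.neg hTh.spectral_theorem).trans (neg_conjStarAlgAut_diagonal _ _))
          (by simpa using Nat.le_of_lt_succ hpos)
      · exact hA.exists_indistinguishable_of_card_neg_le_one hT hT0 _ hTh.spectral_theorem
          (Nat.le_of_lt_succ hneg)
    obtain ⟨x, hx⟩ := hdist P ρ hP hρ hne
    exact hx (hstat x)
  · intro hcond P ρ hP hρ hne
    by_contra! hstat
    have hTh : (ρ - P).IsHermitian := hρ.1.isHermitian.sub hP.1
    have hT : ρ - P ∈ RPerp A :=
      mem_RPerp_iff.mpr ⟨hTh, fun x => (trace_mul_eq_trace_mul_iff _ _ _).mp (hstat x)⟩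
    have hneg := (hcond _ hT (sub_ne_zero.mpr hne) hTh).trans (min_le_right _ _)
    have hrank := card_neg_eigenvalues_sub_le_rank hρ.1 hTh
    rw [hP.2.2] at hrank
    omega
end
end

section
/- If A is an informationally complete POVM on H_A and B is a verifiably pure state informationally complete POVM on H_B, then A⊗B is verifiably pure state informationally complete on H_A ⊗ H_B. -/
open Matrix Kronecker
open scoped ComplexOrder

noncomputable section

/-! For `x ≠ 0` the compression `(x ⊗ 1)ᴴ T (x ⊗ 1)` of `T` to the vectors `x ⊗ v` lies in
`R(B)^⊥`: its trace against `R` is the trace of `(x xᴴ ⊗ R) T`, and `x xᴴ` is Hermitian, hence in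
`R(A)` by informational completeness. By Cauchy interlacing a compression has at most as many
positive and at most as many negative eigenvalues as `T`, so `rank± T ≥ 2` once some compression is
nonzero, and by polarization one is whenever `T ≠ 0`. -/

namespace Matrix.IsHermitian

variable {n : Type*} [Fintype n] [DecidableEq n] {T : Matrix n n ℂ}

theorem re_star_dotProduct_mulVec (hT : T.IsHermitian) (x : n → ℂ) :
    (star x ⬝ᵥ (T *ᵥ x)).re =
      ∑ i, hT.eigenvalues i * ‖(star (hT.eigenvectorUnitary : Matrix n n ℂ) *ᵥ x) i‖ ^ 2 := by
  set U := (hT.eigenvectorUnitary : Matrix n n ℂ)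
  set y := star U *ᵥ x
  have hxy : star x ⬝ᵥ (T *ᵥ x) = star y ⬝ᵥ (diagonal (RCLike.ofReal ∘ hT.eigenvalues) *ᵥ y) := by
    conv_lhs => rw [hT.spectral_theorem, Unitary.conjStarAlgAut_apply]
    simp only [y, ← mulVec_mulVec, dotProduct_mulVec, star_mulVec,
      star_eq_conjTranspose, conjTranspose_conjTranspose, U]
  rw [hxy]
  simp only [dotProduct, mulVec_diagonal, Pi.star_apply, Function.comp_apply, Complex.re_sum]
  refine Finset.sum_congr rfl fun i _ => ?_
  have hnorm : star (y i) * y i = ((‖y i‖ ^ 2 : ℝ) : ℂ) := by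
    rw [← Complex.normSq_eq_norm_sq, Complex.normSq_eq_conj_mul_self]; rfl
  rw [mul_left_comm, hnorm]
  change ((hT.eigenvalues i : ℂ) * ((‖y i‖ ^ 2 : ℝ) : ℂ)).re = _
  rw [← Complex.ofReal_mul, Complex.ofReal_re]

/-- `hT.inertia 1` and `hT.inertia (-1)` count the positive and the negative eigenvalues. -/
def inertia (hT : T.IsHermitian) (ε : ℝ) : ℕ :=
  (Finset.univ.filter fun i => 0 < ε * hT.eigenvalues i).card

theorem finrank_le_inertia (hT : T.IsHermitian) {ε : ℝ} (W : Submodule ℂ (n → ℂ))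
    (hW : ∀ x ∈ W, x ≠ 0 → 0 < ε * (star x ⬝ᵥ (T *ᵥ x)).re) :
    Module.finrank ℂ W ≤ hT.inertia ε := by
  set P := Finset.univ.filter fun i => 0 < ε * hT.eigenvalues i
  let L : W →ₗ[ℂ] (P → ℂ) := LinearMap.funLeft ℂ ℂ Subtype.val ∘ₗ
    (star (hT.eigenvectorUnitary : Matrix n n ℂ)).mulVecLin ∘ₗ W.subtype
  have hL : Function.Injective L := by
    rw [← LinearMap.ker_eq_bot, LinearMap.ker_eq_bot']
    intro w hw
    by_contra hw0
    have hvanish : ∀ i, 0 < ε * hT.eigenvalues i →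
        (star (hT.eigenvectorUnitary : Matrix n n ℂ) *ᵥ w) i = 0 :=
      fun i hi => congrFun hw ⟨i, by simpa [P] using hi⟩
    have hnonpos : ε * (star (w : n → ℂ) ⬝ᵥ (T *ᵥ w)).re ≤ 0 := by
      rw [hT.re_star_dotProduct_mulVec, Finset.mul_sum]
      refine Finset.sum_nonpos fun i _ => ?_
      by_cases hi : 0 < ε * hT.eigenvalues i
      · simp [hvanish i hi]
      · rw [← mul_assoc]
        exact mul_nonpos_of_nonpos_of_nonneg (not_lt.1 hi) (by positivity)
    exact hnonpos.not_gt (hW w w.2 (by simpa using hw0))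
  simpa [inertia, P, Fintype.card_subtype] using LinearMap.finrank_le_finrank_of_injective hL

theorem exists_finrank_eq_inertia (hT : T.IsHermitian) (ε : ℝ) :
    ∃ W : Submodule ℂ (n → ℂ), Module.finrank ℂ W = hT.inertia ε ∧
      ∀ x ∈ W, x ≠ 0 → 0 < ε * (star x ⬝ᵥ (T *ᵥ x)).re := by
  set P := Finset.univ.filter fun i => 0 < ε * hT.eigenvalues i
  have hU : ∀ y, star (hT.eigenvectorUnitary : Matrix n n ℂ) *ᵥ
      ((hT.eigenvectorUnitary : Matrix n n ℂ) *ᵥ y) = y := fun y => by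
    rw [mulVec_mulVec, Unitary.coe_star_mul_self, one_mulVec]
  let F : (P → ℂ) →ₗ[ℂ] (n → ℂ) := (hT.eigenvectorUnitary : Matrix n n ℂ).mulVecLin ∘ₗ
    Function.ExtendByZero.linearMap ℂ Subtype.val
  have hF : Function.Injective F := (Function.LeftInverse.injective hU).comp
    (Function.extend_injective Subtype.val_injective (0 : n → ℂ))
  refine ⟨LinearMap.range F, ?_, ?_⟩
  · rw [LinearMap.finrank_range_of_inj hF, Module.finrank_fintype_fun_eq_card,
      Fintype.card_coe, inertia]
  rintro _ ⟨c, rfl⟩ hc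
  obtain ⟨j, hj⟩ := Function.ne_iff.1 (fun h : c = 0 => hc (by simp [h]))
  set e := Function.extend Subtype.val c (0 : n → ℂ)
  have he : ∀ i : P, e i = c i := Subtype.val_injective.extend_apply c 0
  have he' : ∀ i ∉ P, e i = 0 := fun i hi =>
    Function.extend_apply' _ _ _ fun ⟨k, hk⟩ => hi (hk ▸ k.2)
  change 0 < ε * (star ((hT.eigenvectorUnitary : Matrix n n ℂ) *ᵥ e) ⬝ᵥ
    (T *ᵥ ((hT.eigenvectorUnitary : Matrix n n ℂ) *ᵥ e))).re
  rw [hT.re_star_dotProduct_mulVec, hU, Finset.mul_sum]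
  refine Finset.sum_pos' (fun i _ => ?_) ⟨j, Finset.mem_univ _, ?_⟩
  · rw [← mul_assoc]
    by_cases hi : i ∈ P
    · exact mul_nonneg (Finset.mem_filter.1 hi).2.le (by positivity)
    · simp [he' i hi]
  · rw [← mul_assoc, he]
    exact mul_pos (Finset.mem_filter.1 j.2).2 (pow_pos (norm_pos_iff.2 hj) 2)

theorem inertia_conjTranspose_mul_mul_le {m : Type*} [Fintype m] [DecidableEq m]
    {K : Matrix n m ℂ} (hT : T.IsHermitian) (hKTK : (Kᴴ * T * K).IsHermitian) (ε : ℝ)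
    (hK : Function.Injective K.mulVec) :
    hKTK.inertia ε ≤ hT.inertia ε := by
  obtain ⟨W, hW, hWpos⟩ := hKTK.exists_finrank_eq_inertia ε
  rw [← hW, (W.equivMapOfInjective K.mulVecLin hK).finrank_eq]
  refine hT.finrank_le_inertia _ ?_
  rintro _ ⟨v, hv, rfl⟩ hv0
  rw [mulVecLin_apply, star_mulVec, ← dotProduct_mulVec, mulVec_mulVec, mulVec_mulVec]
  exact hWpos v hv fun h => hv0 (by simp [h])

end Matrix.IsHermitian

theorem rankPM_conjTranspose_mul_mul_le {n m : Type*} [Fintype n] [DecidableEq n] [Fintype m]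
    [DecidableEq m] {T : Matrix n n ℂ} {K : Matrix n m ℂ} (hT : T.IsHermitian)
    (hKTK : (Kᴴ * T * K).IsHermitian) (hK : Function.Injective K.mulVec) :
    rankPM (Kᴴ * T * K) hKTK ≤ rankPM T hT := by
  have h := fun ε => hT.inertia_conjTranspose_mul_mul_le hKTK ε hK
  simpa [rankPM, Matrix.IsHermitian.inertia] using min_le_min (h 1) (h (-1))

theorem Matrix.eq_zero_of_forall_star_dotProduct_mulVec_eq_zero {n : Type*} [Fintype n]
    [DecidableEq n] {M : Matrix n n ℂ} (h : ∀ x, star x ⬝ᵥ (M *ᵥ x) = 0) : M = 0 := by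
  have : toEuclideanLin M = 0 := (inner_map_self_eq_zero _).1 fun x => by
    rw [EuclideanSpace.inner_eq_star_dotProduct, dotProduct_star, dotProduct_comm]
    exact (congrArg star (h x.ofLp)).trans (star_zero ℂ)
  simpa using this

def kroneckerCol {m : Type*} (n : Type*) [DecidableEq n] (x : m → ℂ) : Matrix (m × n) n ℂ :=
  of fun p b => x p.1 * (1 : Matrix n n ℂ) p.2 b

section KroneckerCol

variable {m n : Type*} [Fintype n] [DecidableEq n]

theorem kroneckerCol_mulVec (x : m → ℂ) (v : n → ℂ) :
    kroneckerCol n x *ᵥ v = fun p => x p.1 * v p.2 := by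
  ext p
  simp [kroneckerCol, mulVec, dotProduct, one_apply]

theorem mulVec_kroneckerCol_injective {x : m → ℂ} (hx : x ≠ 0) :
    Function.Injective (kroneckerCol n x).mulVec := by
  intro v w h
  obtain ⟨k, hk⟩ := Function.ne_iff.1 hx
  ext b
  have := congrFun h (k, b)
  rw [kroneckerCol_mulVec, kroneckerCol_mulVec] at this
  exact mul_left_cancel₀ hk this

theorem kroneckerCol_mul_mul_conjTranspose (x : m → ℂ) (R : Matrix n n ℂ) :
    kroneckerCol n x * R * (kroneckerCol n x)ᴴ = vecMulVec x (star x) ⊗ₖ R := by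
  ext ⟨k, a⟩ ⟨l, b⟩
  simp [kroneckerCol, mul_apply, one_apply, vecMulVec_apply, apply_ite]
  ring

theorem conjTranspose_kroneckerCol_mul_mul_apply [Fintype m] (x : m → ℂ)
    (T : Matrix (m × n) (m × n) ℂ) (a b : n) :
    ((kroneckerCol n x)ᴴ * T * kroneckerCol n x) a b =
      star x ⬝ᵥ ((of fun k l => T (k, a) (l, b)) *ᵥ x) := by
  simp [kroneckerCol, mul_apply, one_apply, dotProduct, mulVec, Fintype.sum_prod_type,
    Finset.mul_sum, Finset.sum_mul, apply_ite, ite_mul, mul_assoc]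
  exact Finset.sum_comm

theorem trace_mul_conjTranspose_kroneckerCol_mul [Fintype m] (x : m → ℂ)
    (T : Matrix (m × n) (m × n) ℂ) (R : Matrix n n ℂ) :
    (R * ((kroneckerCol n x)ᴴ * T * kroneckerCol n x)).trace =
      ((vecMulVec x (star x) ⊗ₖ R) * T).trace := by
  rw [← kroneckerCol_mul_mul_conjTranspose]
  calc (R * ((kroneckerCol n x)ᴴ * T * kroneckerCol n x)).trace
      = (R * (kroneckerCol n x)ᴴ * T * kroneckerCol n x).trace := by simp only [Matrix.mul_assoc]
    _ = (kroneckerCol n x * (R * (kroneckerCol n x)ᴴ * T)).trace := trace_mul_comm _ _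
    _ = _ := by simp only [Matrix.mul_assoc]

theorem exists_conjTranspose_kroneckerCol_mul_mul_ne_zero [Fintype m] [DecidableEq m]
    {T : Matrix (m × n) (m × n) ℂ} (hT : T ≠ 0) :
    ∃ x : m → ℂ, (kroneckerCol n x)ᴴ * T * kroneckerCol n x ≠ 0 := by
  by_contra! h
  refine hT (ext fun p q => ?_)
  have hblock : (of fun k l => T (k, p.2) (l, q.2)) = 0 :=
    eq_zero_of_forall_star_dotProduct_mulVec_eq_zero fun x => by
      rw [← conjTranspose_kroneckerCol_mul_mul_apply, h x, Matrix.zero_apply]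
  simpa using congrFun (congrFun hblock p.1) q.1

end KroneckerCol

section Rspan

variable {m n ι κ : Type*} [Fintype m] [DecidableEq m] [Fintype n] [DecidableEq n]

theorem kronecker_mem_Rspan (A : ι → Matrix m m ℂ) (B : κ → Matrix n n ℂ)
    {S : Matrix m m ℂ} {R : Matrix n n ℂ} (hS : S ∈ Rspan A) (hR : R ∈ Rspan B) :
    S ⊗ₖ R ∈ Rspan fun p : ι × κ => A p.1 ⊗ₖ B p.2 := by
  have := Submodule.apply_mem_map₂ (kroneckerBilinear (R := ℝ)) hS hR
  rwa [Rspan, Rspan, Submodule.map₂_span_span, Set.image2_range] at this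

theorem conjTranspose_kroneckerCol_mul_mul_mem_hermPerp (A : ι → Matrix m m ℂ)
    (B : κ → Matrix n n ℂ) {T : Matrix (m × n) (m × n) ℂ}
    (hT : T ∈ hermPerp (Rspan fun p : ι × κ => A p.1 ⊗ₖ B p.2)) {x : m → ℂ}
    (hx : vecMulVec x (star x) ∈ Rspan A) :
    (kroneckerCol n x)ᴴ * T * kroneckerCol n x ∈ hermPerp (Rspan B) :=
  ⟨isHermitian_conjTranspose_mul_mul _ hT.1, fun R hR => by
    rw [trace_mul_conjTranspose_kroneckerCol_mul]
    exact hT.2 _ (kronecker_mem_Rspan A B hx hR)⟩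

end Rspan

theorem stmt19_general {dA dB mA mB : ℕ}
    (A : Fin mA → Matrix (Fin dA) (Fin dA) ℂ) (B : Fin mB → Matrix (Fin dB) (Fin dB) ℂ)
    (hIC : Rspan A = herm (Fin dA))
    (hVB : ∀ T ∈ hermPerp (Rspan B), T ≠ 0 → ∀ hT : T.IsHermitian, 2 ≤ rankPM T hT) :
    ∀ T ∈ hermPerp (Rspan (fun p : Fin mA × Fin mB => A p.1 ⊗ₖ B p.2)),
      T ≠ 0 → ∀ hT : T.IsHermitian, 2 ≤ rankPM T hT := by
  intro T hTperp hT0 hT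
  obtain ⟨x, hx⟩ := exists_conjTranspose_kroneckerCol_mul_mul_ne_zero hT0
  have hx0 : x ≠ 0 := by
    rintro rfl
    exact hx (by ext; simp [kroneckerCol, mul_apply])
  have hxA : vecMulVec x (star x) ∈ Rspan A :=
    hIC ▸ (posSemidef_vecMulVec_self_star x).isHermitian
  have hD := conjTranspose_kroneckerCol_mul_mul_mem_hermPerp A B hTperp hxA
  calc 2 ≤ rankPM _ hD.1 := hVB _ hD hx hD.1
    _ ≤ rankPM T hT := rankPM_conjTranspose_mul_mul_le hT hD.1 (mulVec_kroneckerCol_injective hx0)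

/-- If `A` is informationally complete and `B` is verifiably pure state
informationally complete (every nonzero `T ∈ R(B)^⊥` has `rank±(T) ≥ 2`), then `A ⊗ B` is
verifiably pure state informationally complete. -/
theorem stmt19 {dA dB mA mB : ℕ}
    (A : Fin mA → Matrix (Fin dA) (Fin dA) ℂ) (B : Fin mB → Matrix (Fin dB) (Fin dB) ℂ)
    (hA : IsPOVM A) (hB : IsPOVM B)
    (hIC : Rspan A = herm (Fin dA))
    (hVB : ∀ T ∈ hermPerp (Rspan B), T ≠ 0 → ∀ hT : T.IsHermitian, 2 ≤ rankPM T hT) :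
    ∀ T ∈ hermPerp (Rspan (fun p : Fin mA × Fin mB => A p.1 ⊗ₖ B p.2)),
      T ≠ 0 → ∀ hT : T.IsHermitian, 2 ≤ rankPM T hT :=
  stmt19_general A B hIC hVB
end
end
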